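/- Every parallelogram is a closed billiard trajectory within a unique rectangle, namely the rectangle whose sides lie on the bisectors of the exterior angles of the parallelogram at its four vertices. -/

import Mathlib

open scoped RealInnerProductSpace

noncomputable section

abbrev Pt := EuclideanSpace ℝ (Fin 2)

/-- `A B C D` (in this cyclic order) are the vertices of a nondegenerate rectangle. -/
def IsRectangle (A B C D : Pt) : Prop :=
  A ≠ B ∧ A ≠ D ∧ C = B + D - A ∧ ⟪B - A, D - A⟫ = 0

/-- The billiard reflection law for a vertex `X` of the inscribed polygon lying on a
side with direction `u`: the segments to the previous vertex `Pv` and the next vertex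
`Nx` make equal angles with the two opposite rays of the side line. -/
def ReflectsOffSide (Pv X Nx u : Pt) : Prop :=
  InnerProductGeometry.angle (Pv - X) u = InnerProductGeometry.angle (Nx - X) (-u)

/-- `EFGH` is a closed billiard trajectory within the rectangle `ABCD`, with one vertex
in the interior of each side. -/
def IsBilliardInRectangle (E F G H A B C D : Pt) : Prop :=
  IsRectangle A B C D ∧
  E ∈ openSegment ℝ A B ∧ F ∈ openSegment ℝ B C ∧
  G ∈ openSegment ℝ C D ∧ H ∈ openSegment ℝ D A ∧
  ReflectsOffSide H E F (B - A) ∧ ReflectsOffSide E F G (C - B) ∧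
  ReflectsOffSide F G H (D - C) ∧ ReflectsOffSide G H E (A - D)

lemma angle_eq_iff' {x y w : Pt} (hx : x ≠ 0) (hy : y ≠ 0) (hw : w ≠ 0) :
    InnerProductGeometry.angle x w = InnerProductGeometry.angle y (-w) ↔
      ⟪‖y‖ • x + ‖x‖ • y, w⟫ = 0 := by
  have hxn : (0:ℝ) < ‖x‖ := norm_pos_iff.mpr hx
  have hyn : (0:ℝ) < ‖y‖ := norm_pos_iff.mpr hy
  have hwn : (0:ℝ) < ‖w‖ := norm_pos_iff.mpr hw
  have hip : ⟪‖y‖ • x + ‖x‖ • y, w⟫ = ‖y‖ * ⟪x, w⟫ + ‖x‖ * ⟪y, w⟫ := by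
    rw [inner_add_left, real_inner_smul_left, real_inner_smul_left]
  rw [hip]
  constructor
  · intro h
    have hc := congrArg Real.cos h
    rw [InnerProductGeometry.cos_angle, InnerProductGeometry.cos_angle, inner_neg_right,
      norm_neg] at hc
    rw [div_eq_div_iff (by positivity) (by positivity)] at hc
    have h2 : (‖y‖ * ⟪x, w⟫ + ‖x‖ * ⟪y, w⟫) * ‖w‖ = 0 := by linear_combination hc
    exact (mul_eq_zero.mp h2).resolve_right hwn.ne'
  · intro h
    unfold InnerProductGeometry.angle
    rw [inner_neg_right, norm_neg]
    congr 1
    rw [div_eq_div_iff (by positivity) (by positivity)]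
    linear_combination ‖w‖ * h

lemma reflectsOffSide_iff' {Pv X Nx u : Pt} (h1 : Pv - X ≠ 0) (h2 : Nx - X ≠ 0)
    (hu : u ≠ 0) :
    ReflectsOffSide Pv X Nx u ↔ ⟪‖Nx - X‖ • (Pv - X) + ‖Pv - X‖ • (Nx - X), u⟫ = 0 :=
  angle_eq_iff' h1 h2 hu

lemma perp2' {u v w : Pt} (hu : u ≠ 0) (hv : v ≠ 0) (huv : ⟪u, v⟫ = 0)
    (h1 : ⟪u, w⟫ = 0) (h2 : ⟪v, w⟫ = 0) : w = 0 := by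
  have ic : ∀ x y : Pt, ⟪x, y⟫ = x 0 * y 0 + x 1 * y 1 := fun x y => by
    simp [PiLp.inner_apply, RCLike.inner_apply, Fin.sum_univ_two]; ring
  rw [ic] at huv h1 h2
  have hco : ∀ z : Pt, z 0 = 0 → z 1 = 0 → z = 0 := fun z a b => by
    ext i; fin_cases i <;> simpa
  have hu' : 0 < u 0 ^ 2 + u 1 ^ 2 := by
    rcases (show u 0 ≠ 0 ∨ u 1 ≠ 0 by
      by_contra hcon; push_neg at hcon; exact hu (hco u hcon.1 hcon.2)) with h | h <;>
      rcases h.lt_or_gt with h | h <;> nlinarith [sq_nonneg (u 0), sq_nonneg (u 1)]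
  have hv' : 0 < v 0 ^ 2 + v 1 ^ 2 := by
    rcases (show v 0 ≠ 0 ∨ v 1 ≠ 0 by
      by_contra hcon; push_neg at hcon; exact hv (hco v hcon.1 hcon.2)) with h | h <;>
      rcases h.lt_or_gt with h | h <;> nlinarith [sq_nonneg (v 0), sq_nonneg (v 1)]
  have hd : u 0 * v 1 - u 1 * v 0 ≠ 0 := by
    intro h
    have key : (u 0 ^ 2 + u 1 ^ 2) * (v 0 ^ 2 + v 1 ^ 2)
        = (u 0 * v 1 - u 1 * v 0) ^ 2 + (u 0 * v 0 + u 1 * v 1) ^ 2 := by ring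
    rw [h, huv] at key
    nlinarith [mul_pos hu' hv']
  apply hco
  · have h3 : (u 0 * v 1 - u 1 * v 0) * w 0 = 0 := by linear_combination v 1 * h1 - u 1 * h2
    exact (mul_eq_zero.mp h3).resolve_left hd
  · have h3 : (u 0 * v 1 - u 1 * v 0) * w 1 = 0 := by linear_combination u 0 * h2 - v 0 * h1
    exact (mul_eq_zero.mp h3).resolve_left hd

lemma mem_openSegment_of' {X Y Z w : Pt} {c d : ℝ} (hc : 0 < c) (hd : 0 < d)
    (h1 : Y - X = c • w) (h2 : Z - Y = d • w) : Y ∈ openSegment ℝ X Z := by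
  have hcd : c + d ≠ 0 := by positivity
  rw [sub_eq_iff_eq_add] at h1 h2
  subst h1; subst h2
  refine ⟨d / (c + d), c / (c + d), by positivity, by positivity, by field_simp; ring, ?_⟩
  match_scalars
  · field_simp; ring
  · field_simp
    exact add_comm d c

set_option maxHeartbeats 1000000 in
/-- Every (nondegenerate) parallelogram is a closed billiard trajectory within a unique
rectangle: there is exactly one vertex set of a rectangle within which `EFGH` is a
billiard trajectory (its sides lie on the exterior angle bisectors of the parallelogram,
which is what the reflection law expresses). -/
theorem parallelogram_billiard_in_unique_rectangle
    (E F G H : Pt)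
    (hnc : ¬ Collinear ℝ ({E, F, G, H} : Set Pt))
    (hpar : F - E = G - H) :
    ∃! V : Set Pt, ∃ A B C D : Pt, V = {A, B, C, D} ∧
      IsBilliardInRectangle E F G H A B C D := by
  obtain ⟨p, hF⟩ : ∃ p, F = E + p := ⟨F - E, by abel⟩
  obtain ⟨q, hH⟩ : ∃ q, H = E + q := ⟨H - E, by abel⟩
  subst hF; subst hH
  have hG : G = E + p + q := by
    have h2 : p = G - (E + q) := by simpa using hpar
    rw [h2]; abel
  subst hG
  -- nondegeneracy
  have hp0 : p ≠ 0 := by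
    rintro rfl
    apply hnc
    have hset : ({E, E + (0:Pt), E + 0 + q, E + q} : Set Pt) = {E, E + q} := by
      ext x; simp [add_zero]; try tauto
    rw [hset]; exact collinear_pair ℝ E (E + q)
  have hq0 : q ≠ 0 := by
    rintro rfl
    apply hnc
    have hset : ({E, E + p, E + p + 0, E + (0:Pt)} : Set Pt) = {E, E + p} := by
      ext x; simp [add_zero]; try tauto
    rw [hset]; exact collinear_pair ℝ E (E + p)
  have key : ∀ r : ℝ, q ≠ r • p := by
    intro r hr
    apply hnc
    rw [collinear_iff_of_mem (Set.mem_insert E _)]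
    refine ⟨p, ?_⟩
    rintro x hx
    simp only [Set.mem_insert_iff, Set.mem_singleton_iff] at hx
    rcases hx with rfl | rfl | rfl | rfl
    · exact ⟨0, by simp⟩
    · exact ⟨1, by simp [add_comm]⟩
    · exact ⟨1 + r, by rw [hr]; simp [add_smul]; try module⟩
    · exact ⟨r, by rw [hr]; simp [add_comm]⟩
  have hnp : (0:ℝ) < ‖p‖ := norm_pos_iff.mpr hp0
  have hnq : (0:ℝ) < ‖q‖ := norm_pos_iff.mpr hq0
  set u : Pt := ‖q‖ • p - ‖p‖ • q with hu
  set v : Pt := ‖q‖ • p + ‖p‖ • q with hv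
  have hu0 : u ≠ 0 := by
    intro h
    rw [hu, sub_eq_zero] at h
    exact key (‖p‖⁻¹ * ‖q‖) (by rw [mul_smul, h, inv_smul_smul₀ hnp.ne'])
  have hv0 : v ≠ 0 := by
    intro h
    rw [hv] at h
    have h' : ‖q‖ • p = -(‖p‖ • q) := eq_neg_of_add_eq_zero_left h
    exact key (-(‖p‖⁻¹ * ‖q‖))
      (by rw [neg_smul, mul_smul, h', smul_neg, neg_neg, inv_smul_smul₀ hnp.ne'])
  have huv : ⟪u, v⟫ = 0 := by
    rw [hu, hv, inner_sub_left, inner_add_right, inner_add_right]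
    simp only [real_inner_smul_left, real_inner_smul_right]
    simp only [real_inner_self_eq_norm_sq]
    rw [real_inner_comm q p]
    ring
  have hvu : ⟪v, u⟫ = 0 := by rw [real_inner_comm]; exact huv
  set α : ℝ := (2 * ‖p‖)⁻¹ with hα
  set β : ℝ := (2 * ‖q‖)⁻¹ with hβ
  have hαpos : 0 < α := by rw [hα]; positivity
  have hβpos : 0 < β := by rw [hβ]; positivity
  have hαβ : α + β ≠ 0 := by positivity
  have hpuv : p = β • (u + v) := by
    rw [hβ, hu, hv]
    match_scalars <;> (field_simp; try ring)
  have hqvu : q = α • (v - u) := by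
    rw [hα, hu, hv]
    match_scalars <;> (field_simp; try ring)
  set A : Pt := E - α • u with hA
  set B : Pt := E + β • u with hB
  set C : Pt := E + β • u + (α + β) • v with hC
  set D : Pt := E - α • u + (α + β) • v with hD
  -- side vectors
  have hBA : B - A = (α + β) • u := by rw [hA, hB]; module
  have hDA : D - A = (α + β) • v := by rw [hA, hD]; module
  have hCB : C - B = (α + β) • v := by rw [hB, hC]; module
  have hDC : D - C = (-(α + β)) • u := by rw [hC, hD]; module
  have hAD : A - D = (-(α + β)) • v := by rw [hA, hD]; module
  have hBA0 : B - A ≠ 0 := by rw [hBA]; exact smul_ne_zero hαβ hu0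
  have hDA0 : D - A ≠ 0 := by rw [hDA]; exact smul_ne_zero hαβ hv0
  have hCB0 : C - B ≠ 0 := by rw [hCB]; exact smul_ne_zero hαβ hv0
  have hDC0 : D - C ≠ 0 := by rw [hDC]; exact smul_ne_zero (neg_ne_zero.mpr hαβ) hu0
  have hAD0 : A - D ≠ 0 := by rw [hAD]; exact smul_ne_zero (neg_ne_zero.mpr hαβ) hv0
  -- positions of the four points relative to the rectangle vertices
  have e1 : E - A = α • u := by rw [hA]; module
  have e2 : B - E = β • u := by rw [hB]; module
  have e3 : (E + p) - B = β • v := by rw [hB, hpuv]; module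
  have e4 : C - (E + p) = α • v := by rw [hC, hpuv]; module
  have e5 : (E + p + q) - C = α • (-u) := by rw [hC, hpuv, hqvu]; module
  have e6 : D - (E + p + q) = β • (-u) := by rw [hD, hpuv, hqvu]; module
  have e7 : (E + q) - D = β • (-v) := by rw [hD, hqvu]; module
  have e8 : A - (E + q) = α • (-v) := by rw [hA, hqvu]; module
  -- nonzero difference vectors at the four vertices
  have dq : (E + q) - E ≠ 0 := by simpa using hq0
  have dp : (E + p) - E ≠ 0 := by simpa using hp0
  have dEF : E - (E + p) = -p := by abel
  have dGF : (E + p + q) - (E + p) = q := by abel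
  have dFG : (E + p) - (E + p + q) = -q := by abel
  have dHG : (E + q) - (E + p + q) = -p := by abel
  have dGH : (E + p + q) - (E + q) = p := by abel
  have dEH : E - (E + q) = -q := by abel
  have dEF0 : E - (E + p) ≠ 0 := by rw [dEF]; exact neg_ne_zero.mpr hp0
  have dGF0 : (E + p + q) - (E + p) ≠ 0 := by rw [dGF]; exact hq0
  have dFG0 : (E + p) - (E + p + q) ≠ 0 := by rw [dFG]; exact neg_ne_zero.mpr hq0
  have dHG0 : (E + q) - (E + p + q) ≠ 0 := by rw [dHG]; exact neg_ne_zero.mpr hp0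
  have dGH0 : (E + p + q) - (E + q) ≠ 0 := by rw [dGH]; exact hp0
  have dEH0 : E - (E + q) ≠ 0 := by rw [dEH]; exact neg_ne_zero.mpr hq0
  -- normal vectors at the four vertices
  have nE : ‖(E + p) - E‖ • ((E + q) - E) + ‖(E + q) - E‖ • ((E + p) - E) = v := by
    rw [add_sub_cancel_left, add_sub_cancel_left, hv]; module
  have nF : ‖(E + p + q) - (E + p)‖ • (E - (E + p)) + ‖E - (E + p)‖ • ((E + p + q) - (E + p))
      = -u := by
    rw [dEF, dGF, norm_neg, hu]; module
  have nG : ‖(E + q) - (E + p + q)‖ • ((E + p) - (E + p + q))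
      + ‖(E + p) - (E + p + q)‖ • ((E + q) - (E + p + q)) = -v := by
    rw [dFG, dHG, norm_neg, norm_neg, hv]; module
  have nH : ‖E - (E + q)‖ • ((E + p + q) - (E + q)) + ‖(E + p + q) - (E + q)‖ • (E - (E + q))
      = u := by
    rw [dEH, dGH, norm_neg, hu]; module
  refine ⟨{A, B, C, D}, ⟨A, B, C, D, rfl, ?_, ?_, ?_, ?_, ?_, ?_, ?_, ?_, ?_⟩, ?_⟩
  · -- rectangle
    refine ⟨?_, ?_, ?_, ?_⟩
    · exact fun h => hBA0 (by rw [← h]; rw [sub_self])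
    · exact fun h => hDA0 (by rw [← h]; rw [sub_self])
    · rw [hA, hB, hC, hD]; module
    · rw [hBA, hDA, real_inner_smul_left, real_inner_smul_right, huv]; ring
  · exact mem_openSegment_of' hαpos hβpos e1 e2
  · exact mem_openSegment_of' hβpos hαpos e3 e4
  · exact mem_openSegment_of' hαpos hβpos e5 e6
  · exact mem_openSegment_of' hβpos hαpos e7 e8
  · rw [reflectsOffSide_iff' dq dp hBA0, nE, hBA, real_inner_smul_right, hvu, mul_zero]
  · rw [reflectsOffSide_iff' dEF0 dGF0 hCB0, nF, hCB, inner_neg_left, real_inner_smul_right,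
      huv, mul_zero, neg_zero]
  · rw [reflectsOffSide_iff' dFG0 dHG0 hDC0, nG, hDC, inner_neg_left, real_inner_smul_right,
      hvu, mul_zero, neg_zero]
  · rw [reflectsOffSide_iff' dGH0 dEH0 hAD0, nH, hAD, real_inner_smul_right, huv, mul_zero]
  -- uniqueness
  rintro V' ⟨A', B', C', D', rfl,
    ⟨hab', had', hc', -⟩, hE', hF', hG', hH', r1, r2, r3, r4⟩
  have hBA0' : B' - A' ≠ 0 := sub_ne_zero_of_ne (Ne.symm hab')
  have hDA0' : D' - A' ≠ 0 := sub_ne_zero_of_ne (Ne.symm had')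
  have hCB0' : C' - B' ≠ 0 := by
    have h : C' - B' = D' - A' := by rw [hc']; abel
    rw [h]; exact hDA0'
  have hDC0' : D' - C' ≠ 0 := by
    have h : D' - C' = A' - B' := by rw [hc']; abel
    rw [h]; exact sub_ne_zero_of_ne hab'
  have hAD0' : A' - D' ≠ 0 := sub_ne_zero_of_ne had'
  rw [reflectsOffSide_iff' dq dp hBA0', nE] at r1
  rw [reflectsOffSide_iff' dEF0 dGF0 hCB0', nF, inner_neg_left, neg_eq_zero] at r2
  rw [reflectsOffSide_iff' dFG0 dHG0 hDC0', nG, inner_neg_left, neg_eq_zero] at r3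
  rw [reflectsOffSide_iff' dGH0 dEH0 hAD0', nH] at r4
  -- r1 : ⟪v, B' - A'⟫ = 0, r2 : ⟪u, C' - B'⟫ = 0, r3 : ⟪v, D' - C'⟫ = 0, r4 : ⟪u, A' - D'⟫ = 0
  obtain ⟨s1, t1, hs1, ht1, hst1, hq1⟩ := hE'
  obtain ⟨s2, t2, hs2, ht2, hst2, hq2⟩ := hF'
  obtain ⟨s3, t3, hs3, ht3, hst3, hq3⟩ := hG'
  obtain ⟨s4, t4, hs4, ht4, hst4, hq4⟩ := hH'
  have f1 : B' - E = s1 • (B' - A') := by rw [← hq1]; match_scalars <;> linarith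
  have f1' : A' - E = (-t1) • (B' - A') := by rw [← hq1]; match_scalars <;> linarith
  have f2 : B' - (E + p) = (-t2) • (C' - B') := by rw [← hq2]; match_scalars <;> linarith
  have f2' : C' - (E + p) = s2 • (C' - B') := by rw [← hq2]; match_scalars <;> linarith
  have f3 : C' - (E + p + q) = (-t3) • (D' - C') := by rw [← hq3]; match_scalars <;> linarith
  have f3' : D' - (E + p + q) = s3 • (D' - C') := by rw [← hq3]; match_scalars <;> linarith
  have f4 : D' - (E + q) = (-t4) • (A' - D') := by rw [← hq4]; match_scalars <;> linarith
  have f4' : A' - (E + q) = s4 • (A' - D') := by rw [← hq4]; match_scalars <;> linarith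
  have g1 : ⟪v, B' - E⟫ = 0 := by rw [f1, real_inner_smul_right, r1, mul_zero]
  have g1' : ⟪v, A' - E⟫ = 0 := by rw [f1', real_inner_smul_right, r1, mul_zero]
  have g2 : ⟪u, B' - (E + p)⟫ = 0 := by rw [f2, real_inner_smul_right, r2, mul_zero]
  have g2' : ⟪u, C' - (E + p)⟫ = 0 := by rw [f2', real_inner_smul_right, r2, mul_zero]
  have g3 : ⟪v, C' - (E + p + q)⟫ = 0 := by rw [f3, real_inner_smul_right, r3, mul_zero]
  have g4' : ⟪u, A' - (E + q)⟫ = 0 := by rw [f4', real_inner_smul_right, r4, mul_zero]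
  -- the corresponding facts for our rectangle
  have m1 : ⟪v, B - E⟫ = 0 := by rw [e2, real_inner_smul_right, hvu, mul_zero]
  have m1' : ⟪v, A - E⟫ = 0 := by
    have h : A - E = (-α) • u := by rw [hA]; module
    rw [h, real_inner_smul_right, hvu, mul_zero]
  have m2 : ⟪u, B - (E + p)⟫ = 0 := by
    have h : B - (E + p) = (-β) • v := by rw [hB, hpuv]; module
    rw [h, real_inner_smul_right, huv, mul_zero]
  have m2' : ⟪u, C - (E + p)⟫ = 0 := by rw [e4, real_inner_smul_right, huv, mul_zero]
  have m3 : ⟪v, C - (E + p + q)⟫ = 0 := by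
    have h : C - (E + p + q) = α • u := by rw [hC, hpuv, hqvu]; module
    rw [h, real_inner_smul_right, hvu, mul_zero]
  have m4 : ⟪u, A - (E + q)⟫ = 0 := by
    rw [e8, real_inner_smul_right, inner_neg_right, huv, neg_zero, mul_zero]
  have hB' : B' = B := by
    refine sub_eq_zero.mp (perp2' hu0 hv0 huv ?_ ?_)
    · have h : B' - B = (B' - (E + p)) - (B - (E + p)) := by abel
      rw [h, inner_sub_right, g2, m2, sub_zero]
    · have h : B' - B = (B' - E) - (B - E) := by abel
      rw [h, inner_sub_right, g1, m1, sub_zero]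
  have hA' : A' = A := by
    refine sub_eq_zero.mp (perp2' hu0 hv0 huv ?_ ?_)
    · have h : A' - A = (A' - (E + q)) - (A - (E + q)) := by abel
      rw [h, inner_sub_right, g4', m4, sub_zero]
    · have h : A' - A = (A' - E) - (A - E) := by abel
      rw [h, inner_sub_right, g1', m1', sub_zero]
  have hC'' : C' = C := by
    refine sub_eq_zero.mp (perp2' hu0 hv0 huv ?_ ?_)
    · have h : C' - C = (C' - (E + p)) - (C - (E + p)) := by abel
      rw [h, inner_sub_right, g2', m2', sub_zero]
    · have h : C' - C = (C' - (E + p + q)) - (C - (E + p + q)) := by abel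
      rw [h, inner_sub_right, g3, m3, sub_zero]
  have hD' : D' = D := by
    have h : D' = C' - B' + A' := by rw [hc']; abel
    rw [hA', hB', hC''] at h
    rw [h, hA, hB, hC, hD]; module
  rw [hA', hB', hC'', hD']
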